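/- Let λ ∈ Λ⁺(r) be a partition that is not a p-partition (i.e. some nonzero part λ_a is not a power of p), and write λ_a = s·p^k + R with 1 ≤ s < p, 0 ≤ R < p^k (and R > 0 if s = 1). Let ν be the composition obtained from λ by replacing the part λ_a with s parts equal to p^k followed by a part equal to R (if R > 0). Then ν precedes λ in the dominance-via-lexicographic order on associated partitions (ν < λ), the Young subgroup S_ν is contained in S_λ, and the index [S_λ : S_ν] = (s·p^k + R)!/((p^k!)^s · R!) is nonzero modulo p. -/

import Mathlib

/-- The label of the block of the composition `l` containing `k`:
`0` for `k = 0`, the (1-based) index of the consecutive `l`-block containing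
`k` for `1 ≤ k ≤ l.sum`, and `l.length + 1` for `k > l.sum`. -/
def blockOf (l : List ℕ) (k : ℕ) : ℕ :=
  if k = 0 then 0
  else ((Finset.range l.length).filter (fun i => (l.take (i + 1)).sum < k)).card + 1

/-- The Young subgroup of the composition `l`, as the set of permutations of `ℕ`
preserving every `l`-block (and fixing `0` and everything beyond `l.sum`). -/
def youngSet (l : List ℕ) : Set (Equiv.Perm ℕ) :=
  {σ | (∀ k, blockOf l (σ k) = blockOf l k) ∧ ∀ k, l.sum < k → σ k = k}

/-- `l₁ < l₂` in the order on compositions induced by the lexicographic order on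
the associated partitions: there is a largest part-size `K` at which the
multiplicities differ, and there `l₁` has fewer parts. -/
def compLt (l₁ l₂ : List ℕ) : Prop :=
  ∃ K, 0 < K ∧ l₁.count K < l₂.count K ∧ ∀ i, K < i → l₁.count i = l₂.count i

/-- The composition obtained from `l` by replacing the part at index `a` by
`s` parts equal to `pk` followed by a part `R` (if `R > 0`). -/
def nuList (l : List ℕ) (a s pk R : ℕ) : List ℕ :=
  l.take a ++ List.replicate s pk ++ (if R = 0 then [] else [R]) ++ l.drop (a + 1)

/-
The parts replacing `λ_a` in `ν` are all smaller than `λ_a`, so `ν` has one part equal to `λ_a`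
fewer than `λ` and the same multiplicities above it. Every partial sum of `λ` is a partial sum
of `ν`, so the `ν`-blocks refine the `λ`-blocks and `S_ν ≤ S_λ`. A Young subgroup is the
stabiliser of the map sending a point to the label of its block, so `|S_λ| = ∏ λ_i!`, and the
index is the multinomial coefficient `(s p^k + R)! / ((p^k)!^s R!)`. Its `p`-adic valuation
vanishes by Legendre's formula: the base-`p` digits of `s p^k + R` are those of `R` together
with the digit `s` in position `k`, so no carries occur.
-/

open Finset Equiv

lemma List.sum_take_le_sum_take (l : List ℕ) {i j : ℕ} (hij : i ≤ j) :
    (l.take i).sum ≤ (l.take j).sum := by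
  obtain ⟨t, ht⟩ := List.take_prefix_take_left (l := l) hij
  rw [← ht, List.sum_append]
  exact Nat.le_add_right _ _

lemma blockOf_eq_card_filter (l : List ℕ) (x : ℕ) :
    blockOf l x = #{j ∈ range (l.length + 1) | (l.take j).sum < x} := by
  rcases Nat.eq_zero_or_pos x with rfl | hx
  · simp [blockOf]
  · rw [blockOf, if_neg hx.ne', card_filter, card_filter, sum_range_succ']
    simp [hx]

lemma le_blockOf_of_sum_take_lt {l : List ℕ} {j x : ℕ} (hj : j ≤ l.length)
    (hx : (l.take j).sum < x) : j + 1 ≤ blockOf l x := by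
  rw [blockOf_eq_card_filter, ← card_range (j + 1)]
  refine card_le_card fun i hi => ?_
  rw [mem_range] at hi
  exact mem_filter.2 ⟨mem_range.2 (by omega),
    (l.sum_take_le_sum_take (Nat.lt_succ_iff.1 hi)).trans_lt hx⟩

lemma blockOf_le_of_le_sum_take {l : List ℕ} {j x : ℕ}
    (hx : x ≤ (l.take j).sum) : blockOf l x ≤ j := by
  rw [blockOf_eq_card_filter, ← card_range j]
  refine card_le_card fun i hi => ?_
  rw [mem_filter] at hi
  by_contra h
  exact (hx.trans (l.sum_take_le_sum_take (not_lt.1 (mt mem_range.2 h)))).not_gt hi.2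

lemma blockOf_eq_blockOf_iff {l : List ℕ} {x y : ℕ} :
    blockOf l x = blockOf l y ↔
      ∀ j ≤ l.length, ((l.take j).sum < x ↔ (l.take j).sum < y) := by
  refine ⟨fun h j hj => ⟨fun hx => ?_, fun hy => ?_⟩, fun h => ?_⟩
  · by_contra hy
    have := le_blockOf_of_sum_take_lt hj hx
    have := blockOf_le_of_le_sum_take (not_lt.1 hy)
    omega
  · by_contra hx
    have := le_blockOf_of_sum_take_lt hj hy
    have := blockOf_le_of_le_sum_take (not_lt.1 hx)
    omega
  · simp_rw [blockOf_eq_card_filter]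
    congr 1
    exact filter_congr fun j hj => h j (Nat.lt_succ_iff.1 (mem_range.1 hj))

lemma blockOf_eq_zero_iff {l : List ℕ} {x : ℕ} : blockOf l x = 0 ↔ x = 0 := by
  simp [blockOf]

lemma blockOf_eq_succ_iff {l : List ℕ} {m x : ℕ} (hm : m < l.length) :
    blockOf l x = m + 1 ↔ (l.take m).sum < x ∧ x ≤ (l.take (m + 1)).sum := by
  refine ⟨fun h => ⟨?_, ?_⟩, fun ⟨h₁, h₂⟩ => ?_⟩
  · by_contra h'
    have := blockOf_le_of_le_sum_take (not_lt.1 h')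
    omega
  · by_contra h'
    have := le_blockOf_of_sum_take_lt (by omega) (not_le.1 h')
    omega
  · have := le_blockOf_of_sum_take_lt hm.le h₁
    have := blockOf_le_of_le_sum_take h₂
    omega

lemma blockOf_le_length {l : List ℕ} {x : ℕ} (hx : x ≤ l.sum) : blockOf l x ≤ l.length :=
  blockOf_le_of_le_sum_take (by rwa [List.take_length])

lemma youngSet_subset_of_sum_take {l m : List ℕ} (hsum : m.sum = l.sum)
    (h : ∀ j ≤ l.length, ∃ j' ≤ m.length, (m.take j').sum = (l.take j).sum) :
    youngSet m ⊆ youngSet l := by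
  rintro σ ⟨hσ, hfix⟩
  refine ⟨fun k => ?_, fun k hk => hfix k (hsum ▸ hk)⟩
  have := hσ k
  rw [blockOf_eq_blockOf_iff] at this ⊢
  intro j hj
  obtain ⟨j', hj', hsum⟩ := h j hj
  rw [← hsum]
  exact this j' hj'

lemma card_subtype_fin_eq_card_filter_range (N : ℕ) (P : ℕ → Prop) [DecidablePred P] :
    Fintype.card {i : Fin N // P i} = #{x ∈ range N | P x} := by
  rw [Fintype.card_subtype, ← Nat.Iio_eq_range, ← Fin.map_valEmbedding_univ, filter_map, card_map]
  rfl

def blockLabel (l : List ℕ) (i : Fin (l.sum + 1)) : Fin (l.length + 1) :=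
  ⟨blockOf l i, Nat.lt_succ_of_le (blockOf_le_length (Nat.lt_succ_iff.1 i.2))⟩

def permFinEquiv (n : ℕ) : Perm (Fin (n + 1)) ≃ {σ : Perm ℕ // ∀ k, n < k → σ k = k} :=
  (permCongr Fin.equivSubtype).trans <|
    (Perm.subtypeEquivSubtypePerm (· < n + 1)).trans <|
      subtypeEquivRight fun σ => forall_congr' fun k => by rw [not_lt, Nat.succ_le_iff]

lemma permFinEquiv_apply (n : ℕ) (g : Perm (Fin (n + 1))) (i : Fin (n + 1)) :
    (permFinEquiv n g : Perm ℕ) i = g i := by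
  simp only [permFinEquiv, trans_apply, subtypeEquivRight_apply_coe]
  rw [Perm.subtypeEquivSubtypePerm_apply_of_mem (p := (· < n + 1)) _ i.2]
  rfl

def youngSetEquiv (l : List ℕ) :
    {g : Perm (Fin (l.sum + 1)) // blockLabel l ∘ g = blockLabel l} ≃ youngSet l :=
  ((permFinEquiv l.sum).subtypeEquiv fun g => by
    refine ⟨fun h k => ?_, fun h => funext fun i => Fin.ext ?_⟩
    · rcases le_or_gt k l.sum with hk | hk
      · simpa [permFinEquiv_apply _ g ⟨k, Nat.lt_succ_of_le hk⟩, blockLabel, Fin.ext_iff]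
          using congrFun h ⟨k, Nat.lt_succ_of_le hk⟩
      · rw [(permFinEquiv l.sum g).2 k hk]
    · simpa [permFinEquiv_apply, blockLabel] using h i).trans <|
    (subtypeSubtypeEquivSubtypeInter _ _).trans <| subtypeEquivRight fun σ => and_comm

lemma filter_blockOf_eq_zero (l : List ℕ) : {x ∈ range (l.sum + 1) | blockOf l x = 0} = {0} := by
  ext x
  simp [blockOf_eq_zero_iff]

lemma filter_blockOf_eq_succ (l : List ℕ) {m : ℕ} (hm : m < l.length) :
    {x ∈ range (l.sum + 1) | blockOf l x = m + 1} = Ioc (l.take m).sum (l.take (m + 1)).sum := by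
  have := l.sum_take_le_sum_take (show m + 1 ≤ l.length from hm)
  rw [List.take_length] at this
  ext x
  simp only [mem_filter, mem_range, mem_Ioc, blockOf_eq_succ_iff hm]
  omega

lemma card_blockLabel_fiber (l : List ℕ) (m : Fin (l.length + 1)) :
    Fintype.card {i // blockLabel l i = m} = #{x ∈ range (l.sum + 1) | blockOf l x = m} := by
  simp only [blockLabel, Fin.ext_iff]
  exact card_subtype_fin_eq_card_filter_range _ (blockOf l · = m)

lemma ncard_youngSet (l : List ℕ) : (youngSet l).ncard = (l.map Nat.factorial).prod := by
  rw [← Nat.card_coe_set_eq, ← Nat.card_congr (youngSetEquiv l), Nat.card_eq_fintype_card,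
    DomMulAct.stabilizer_card, Fin.prod_univ_succ, card_blockLabel_fiber, Fin.val_zero,
    filter_blockOf_eq_zero, card_singleton, Nat.factorial_one, one_mul,
    ← Fin.prod_univ_fun_getElem]
  refine Finset.prod_congr rfl fun m _ => ?_
  rw [card_blockLabel_fiber, Fin.val_succ, filter_blockOf_eq_succ l m.2, Nat.card_Ioc,
    List.sum_take_succ _ _ m.2, Nat.add_sub_cancel_left]

section Replace

variable (A M B : List ℕ)

lemma exists_sum_take_eq_of_replace {j : ℕ} (hj : j ≤ (A ++ M.sum :: B).length) :
    ∃ j' ≤ (A ++ M ++ B).length, ((A ++ M ++ B).take j').sum = ((A ++ M.sum :: B).take j).sum := by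
  rcases le_or_gt j A.length with hjA | hjA
  · refine ⟨j, by simp; omega, ?_⟩
    rw [List.append_assoc, List.take_append_of_le_length hjA, List.take_append_of_le_length hjA]
  · obtain ⟨t, rfl⟩ : ∃ t, j = A.length + (t + 1) := ⟨j - A.length - 1, by omega⟩
    refine ⟨A.length + (M.length + t), by simp at hj ⊢; omega, ?_⟩
    rw [List.append_assoc, List.take_length_add_append, List.take_length_add_append,
      List.take_length_add_append, List.take_succ_cons]
    simp only [List.sum_append, List.sum_cons]

lemma youngSet_replace_subset :
    youngSet (A ++ M ++ B) ⊆ youngSet (A ++ M.sum :: B) :=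
  youngSet_subset_of_sum_take (by simp) fun _ => exists_sum_take_eq_of_replace A M B

lemma compLt_replace {x : ℕ} (hx : 0 < x) (hM : ∀ y ∈ M, y < x) :
    compLt (A ++ M ++ B) (A ++ x :: B) := by
  have hcount : ∀ i, x ≤ i → M.count i = 0 := fun i hi =>
    List.count_eq_zero.2 fun h => (hM i h).not_ge hi
  refine ⟨x, hx, ?_, fun i hi => ?_⟩
  · simp only [List.count_append, List.count_cons_self, hcount x le_rfl]
    omega
  · simp only [List.count_append, List.count_cons, hcount i hi.le, beq_iff_eq, hi.ne, if_false]
    omega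

lemma ncard_youngSet_div_ncard_youngSet_replace :
    (youngSet (A ++ M.sum :: B)).ncard / (youngSet (A ++ M ++ B)).ncard =
      M.sum.factorial / (M.map Nat.factorial).prod := by
  have hpos : ∀ L : List ℕ, 0 < (L.map Nat.factorial).prod := fun L =>
    List.prod_pos fun y hy => by
      obtain ⟨z, -, rfl⟩ := List.mem_map.1 hy
      exact Nat.factorial_pos z
  simp only [ncard_youngSet, List.map_append, List.map_cons, List.prod_append, List.prod_cons]
  rw [mul_assoc, Nat.mul_div_mul_left _ _ (hpos A), Nat.mul_div_mul_right _ _ (hpos B)]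

end Replace

def splitParts (s pk R : ℕ) : List ℕ :=
  List.replicate s pk ++ if R = 0 then [] else [R]

lemma sum_splitParts (s pk R : ℕ) : (splitParts s pk R).sum = s * pk + R := by
  unfold splitParts; split_ifs <;> simp [*]

lemma prod_map_factorial_splitParts (s pk R : ℕ) :
    ((splitParts s pk R).map Nat.factorial).prod = pk.factorial ^ s * R.factorial := by
  unfold splitParts; split_ifs <;> simp [*]

lemma eq_of_mem_splitParts {s pk R y : ℕ} (hy : y ∈ splitParts s pk R) : y = pk ∨ y = R := by
  unfold splitParts at hy
  split_ifs at hy <;> simp at hy <;> tauto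

lemma exists_eq_append_cons_and_nuList_eq (l : List ℕ) {a : ℕ} (ha : a < l.length) (s pk R : ℕ) :
    ∃ A B, l = A ++ l[a] :: B ∧ nuList l a s pk R = A ++ splitParts s pk R ++ B :=
  ⟨l.take a, l.drop (a + 1), by rw [List.getElem_cons_drop, List.take_append_drop],
    by simp [nuList, splitParts]⟩

lemma factorial_pow_mul_factorial_dvd_factorial (n m s : ℕ) :
    n.factorial ^ s * m.factorial ∣ (s * n + m).factorial := by
  induction s with
  | zero => simp
  | succ s ih =>
    rw [show (s + 1) * n + m = n + (s * n + m) by ring, pow_succ', mul_assoc]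
    exact (mul_dvd_mul_left _ ih).trans (Nat.factorial_mul_factorial_dvd_factorial_add _ _)

lemma padicValNat_factorial_mul_pow_add {p s k R : ℕ} [hp : Fact p.Prime] (hs : s < p)
    (hR : R < p ^ k) :
    padicValNat p (s * p ^ k + R).factorial =
      s * padicValNat p (p ^ k).factorial + padicValNat p R.factorial := by
  have hlog {n : ℕ} (hn : n < p ^ (k + 1)) : Nat.log p n < k + 1 :=
    Nat.log_lt_of_lt_pow' k.succ_ne_zero hn
  have hpk : p ^ k < p ^ (k + 1) := Nat.pow_lt_pow_succ hp.out.one_lt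
  have hN : s * p ^ k + R < p ^ (k + 1) := by
    rw [pow_succ]
    nlinarith
  rw [padicValNat_factorial (hlog hN), padicValNat_factorial (hlog hpk),
    padicValNat_factorial (hlog (hR.trans hpk)), mul_sum, ← sum_add_distrib]
  refine sum_congr rfl fun i hi => ?_
  have hik : i ≤ k := Nat.lt_succ_iff.1 (mem_Ico.1 hi).2
  rw [Nat.pow_div hik hp.out.pos, ← Nat.pow_sub_mul_pow p hik, ← mul_assoc, add_comm,
    Nat.add_mul_div_right _ _ (pow_pos hp.out.pos i), add_comm]

lemma not_dvd_factorial_div {p s k R : ℕ} (hp : p.Prime) (hs : s < p) (hR : R < p ^ k) :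
    ¬ p ∣ (s * p ^ k + R).factorial / ((p ^ k).factorial ^ s * R.factorial) := by
  have := Fact.mk hp
  have hdvd := factorial_pow_mul_factorial_dvd_factorial (p ^ k) R s
  have hne : (s * p ^ k + R).factorial / ((p ^ k).factorial ^ s * R.factorial) ≠ 0 :=
    (Nat.div_pos (Nat.le_of_dvd (Nat.factorial_pos _) hdvd) (by positivity)).ne'
  rw [dvd_iff_padicValNat_ne_zero hne, padicValNat.div_of_dvd hdvd,
    padicValNat.mul (by positivity) (by positivity), padicValNat.pow,
    padicValNat_factorial_mul_pow_add hs hR, Nat.sub_self]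
  exact fun h => h rfl

theorem stmt_10_general (p : ℕ) (hp : p.Prime) (l : List ℕ)
    (a s k R : ℕ) (ha : a < l.length)
    (hval : l.get ⟨a, ha⟩ = s * p ^ k + R)
    (hs : 1 ≤ s) (hsp : s < p) (hR : R < p ^ k) (hR1 : s = 1 → 0 < R) :
    compLt (nuList l a s (p ^ k) R) l ∧
    youngSet (nuList l a s (p ^ k) R) ⊆ youngSet l ∧
    Set.ncard (youngSet l) / Set.ncard (youngSet (nuList l a s (p ^ k) R)) =
      (s * p ^ k + R).factorial / ((p ^ k).factorial ^ s * R.factorial) ∧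
    ¬ p ∣ (s * p ^ k + R).factorial / ((p ^ k).factorial ^ s * R.factorial) := by
  obtain ⟨A, B, hl, hν⟩ := exists_eq_append_cons_and_nuList_eq l ha s (p ^ k) R
  rw [List.get_eq_getElem] at hval
  rw [hval] at hl
  have hpk : p ^ k < s * p ^ k + R := by
    rcases hs.eq_or_lt with rfl | hs
    · linarith [hR1 rfl]
    · nlinarith [pow_pos hp.pos k]
  rw [hν, hl]
  refine ⟨compLt_replace A _ B (by omega) fun y hy => ?_, ?_, ?_, not_dvd_factorial_div hp hsp hR⟩
  · rcases eq_of_mem_splitParts hy with rfl | rfl <;> omega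
  · simpa only [sum_splitParts] using youngSet_replace_subset A (splitParts s (p ^ k) R) B
  · simpa only [sum_splitParts, prod_map_factorial_splitParts] using
      ncard_youngSet_div_ncard_youngSet_replace A (splitParts s (p ^ k) R) B

theorem stmt_10 (p : ℕ) (hp : p.Prime) (r : ℕ) (l : List ℕ)
    (hsort : List.Pairwise (· ≥ ·) l) (hsum : l.sum = r)
    (a s k R : ℕ) (ha : a < l.length)
    (hval : l.get ⟨a, ha⟩ = s * p ^ k + R)
    (hs : 1 ≤ s) (hsp : s < p) (hR : R < p ^ k) (hR1 : s = 1 → 0 < R) :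
    compLt (nuList l a s (p ^ k) R) l ∧
    youngSet (nuList l a s (p ^ k) R) ⊆ youngSet l ∧
    Set.ncard (youngSet l) / Set.ncard (youngSet (nuList l a s (p ^ k) R)) =
      (s * p ^ k + R).factorial / ((p ^ k).factorial ^ s * R.factorial) ∧
    ¬ p ∣ (s * p ^ k + R).factorial / ((p ^ k).factorial ^ s * R.factorial) :=
  stmt_10_general p hp l a s k R ha hval hs hsp hR hR1
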